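/- Let N ≥ 2 and 1 ≤ C < N, and fix indices i ≠ k in {1,…,N}. Let A_1,…,A_N be independent random variables with A_j exponentially distributed with rate λ_j > 0, let π_k(λ) = P( #{ j ≠ k : A_j < A_k } ≤ C − 1 ), and let M_{ik}(t) = #{ j ∉ {i,k} : A_j < t }. Then the partial derivative of π_k with respect to λ_i exists at every λ ∈ (0,∞)^N and equals ∂π_k/∂λ_i (λ) = −λ_k · G_{ik}(λ), where G_{ik}(λ) = ∫_0^∞ t e^{−(λ_i+λ_k)t} P(M_{ik}(t) = C − 1) dt. Moreover G_{ik}(λ) = G_{ki}(λ) and G_{ik}(λ) > 0. -/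

import Mathlib

/-!
Conditioning on `A_k = t`, item `k` is cached iff at most `C - 1` of the other items are
younger than `t`, so `π_k = ∫ λ_k e^{-λ_k t} P(M_k(t) ≤ C - 1) dt` with
`M_k(t) = #{j ≠ k : A_j < t}`. Splitting off item `i`,
`P(M_k(t) ≤ C - 1) = P(M_{ik}(t) ≤ C - 1) - (1 - e^{-λ_i t}) P(M_{ik}(t) = C - 1)`
is affine in `e^{-λ_i t}` and the other terms do not involve `λ_i`, so differentiating under the
integral sign gives `∂π_k/∂λ_i = -λ_k ∫ t e^{-(λ_i + λ_k) t} P(M_{ik}(t) = C - 1) dt`.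
Symmetry and positivity of `G_{ik}` are read off this integral.
-/

open Finset MeasureTheory ProbabilityTheory

/-- The stationary LRU occupancy probability of item `k` at rate vector
`λ`: the probability, under independent exponential ages `A_j` with rates
`λ_j` (i.e. under the product of exponential measures), that fewer than `C`
of the other items have age smaller than `A_k`, i.e.
`π_k(λ) = P(#{j ≠ k : A_j < A_k} ≤ C - 1)`. -/
noncomputable def occ (N C : ℕ) (k : Fin N) (lam : Fin N → ℝ) : ℝ :=
  ((Measure.pi fun j => ProbabilityTheory.expMeasure (lam j))
    {a : Fin N → ℝ |
      (Finset.univ.filter fun j => j ≠ k ∧ a j < a k).card ≤ C - 1}).toReal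

/-- The sensitivity kernel
`G_{ik}(λ) = ∫_0^∞ t e^{-(λ_i+λ_k)t} P(M_{ik}(t) = C-1) dt`, where
`P(M_{ik}(t) = C-1) = Σ_{W ⊆ {1,…,N}\{i,k}, |W|=C-1}
  Π_{j∈W}(1 - e^{-λ_j t}) Π_{j∉W∪{i,k}} e^{-λ_j t}`. -/
noncomputable def Gkernel (N C : ℕ) (i k : Fin N) (lam : Fin N → ℝ) : ℝ :=
  ∫ t in Set.Ioi (0 : ℝ),
    t * Real.exp (-(lam i + lam k) * t) *
      ∑ W ∈ ((Finset.univ : Finset (Fin N)) \ {i, k}).powersetCard (C - 1),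
        (∏ j ∈ W, (1 - Real.exp (-(lam j) * t))) *
          ∏ j ∈ ((Finset.univ : Finset (Fin N)) \ {i, k}) \ W,
            Real.exp (-(lam j) * t)

open Real Set
open scoped ENNReal

lemma integrableOn_mul_exp_neg_mul {c : ℝ} (hc : 0 < c) :
    IntegrableOn (fun t : ℝ => t * exp (-c * t)) (Ioi 0) := by
  simpa only [rpow_one] using
    integrableOn_rpow_mul_exp_neg_mul_rpow (s := 1) (p := 1) (by norm_num) one_pos hc

theorem hasDerivAt_integral_exp_neg_mul {g : ℝ → ℝ} {M x₀ : ℝ} (hx₀ : 0 < x₀)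
    (hg : AEStronglyMeasurable g (volume.restrict (Ioi 0)))
    (hgM : ∀ t ∈ Ioi (0 : ℝ), ‖g t‖ ≤ M) :
    HasDerivAt (fun x => ∫ t in Ioi 0, exp (-x * t) * g t)
      (-∫ t in Ioi 0, t * exp (-x₀ * t) * g t) x₀ := by
  have hexp : ∀ x, AEStronglyMeasurable (fun t : ℝ => exp (-x * t)) (volume.restrict (Ioi 0)) :=
    fun x => by fun_prop
  have hgM' : ∀ᵐ t ∂(volume.restrict (Ioi 0)), ‖g t‖ ≤ M :=
    ae_restrict_of_forall_mem measurableSet_Ioi hgM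
  have key := hasDerivAt_integral_of_dominated_loc_of_deriv_le (μ := volume.restrict (Ioi 0))
    (F := fun x t => exp (-x * t) * g t) (F' := fun x t => -(t * exp (-x * t) * g t))
    (bound := fun t => M * (t * exp (-(x₀ / 2) * t)))
    (Metric.ball_mem_nhds x₀ (half_pos hx₀))
    (.of_forall fun x => (hexp x).mul hg)
    ((exp_neg_integrableOn_Ioi 0 hx₀).mul_bdd hg hgM')
    (((continuous_id.mul (by fun_prop)).aestronglyMeasurable.mul hg).neg)
    ?_ ((integrableOn_mul_exp_neg_mul (half_pos hx₀)).const_mul M)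
    (.of_forall fun t x _ => by
      simpa [mul_comm, mul_assoc, mul_left_comm] using
        (((hasDerivAt_id x).neg.mul_const t).exp.mul_const (g t)))
  · simpa only [integral_neg] using key.2
  · filter_upwards [ae_restrict_mem measurableSet_Ioi] with t (ht : 0 < t) x hx
    have hx' : x₀ / 2 < x := by
      rw [Metric.mem_ball, Real.dist_eq] at hx
      linarith [(abs_lt.mp hx).1]
    have hexp_le : exp (-x * t) ≤ exp (-(x₀ / 2) * t) := exp_le_exp.mpr (by nlinarith)
    rw [norm_neg, norm_mul, norm_mul, norm_of_nonneg ht.le, norm_of_nonneg (exp_pos _).le]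
    calc t * exp (-x * t) * ‖g t‖ ≤ t * exp (-(x₀ / 2) * t) * M := by
          gcongr
          exact hgM t ht
      _ = M * (t * exp (-(x₀ / 2) * t)) := by ring

section YoungSetProb

variable {ι : Type*} [DecidableEq ι] (lam : ι → ℝ) (T W : Finset ι)

/- For independent ages `A_j ~ Exp(lam j)`, `j ∈ T`: `youngSetProb lam T W t` is the probability
that `{j ∈ T | A_j < t} = W`, and `countLeProb lam T m t`, `countEqProb lam T m t` are the
probabilities that this set has at most, resp. exactly, `m` elements. -/
noncomputable def youngSetProb (t : ℝ) : ℝ :=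
  (∏ j ∈ W, (1 - exp (-lam j * t))) * ∏ j ∈ T \ W, exp (-lam j * t)

noncomputable def countLeProb (m : ℕ) (t : ℝ) : ℝ :=
  ∑ W ∈ T.powerset with #W ≤ m, youngSetProb lam T W t

noncomputable def countEqProb (m : ℕ) (t : ℝ) : ℝ :=
  ∑ W ∈ T.powersetCard m, youngSetProb lam T W t

@[fun_prop]
lemma continuous_youngSetProb : Continuous (youngSetProb lam T W) := by
  unfold youngSetProb; fun_prop

@[fun_prop]
lemma continuous_countLeProb (m : ℕ) : Continuous (countLeProb lam T m) := by
  unfold countLeProb; fun_prop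

@[fun_prop]
lemma continuous_countEqProb (m : ℕ) : Continuous (countEqProb lam T m) := by
  unfold countEqProb; fun_prop

variable {lam T W} {t : ℝ}

lemma sum_powerset_youngSetProb : ∑ W ∈ T.powerset, youngSetProb lam T W t = 1 := by
  simp_rw [youngSetProb, ← prod_add, sub_add_cancel, prod_const_one]

lemma youngSetProb_nonneg (hlam : ∀ j, 0 ≤ lam j) (ht : 0 ≤ t) :
    0 ≤ youngSetProb lam T W t :=
  mul_nonneg (prod_nonneg fun j _ => sub_nonneg.2 <| exp_le_one_iff.2 <| by
    nlinarith [hlam j]) (prod_nonneg fun _ _ => (exp_pos _).le)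

lemma youngSetProb_pos (hlam : ∀ j, 0 < lam j) (ht : 0 < t) : 0 < youngSetProb lam T W t :=
  mul_pos (prod_pos fun j _ => sub_pos.2 <| exp_lt_one_iff.2 <| by
    nlinarith [hlam j]) (prod_pos fun _ _ => exp_pos _)

lemma sum_youngSetProb_mem_Icc {𝒲 : Finset (Finset ι)} (h𝒲 : 𝒲 ⊆ T.powerset)
    (hlam : ∀ j, 0 ≤ lam j) (ht : 0 ≤ t) :
    ∑ W ∈ 𝒲, youngSetProb lam T W t ∈ Set.Icc 0 1 :=
  ⟨sum_nonneg fun _ _ => youngSetProb_nonneg hlam ht,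
    (sum_le_sum_of_subset_of_nonneg h𝒲 fun _ _ _ => youngSetProb_nonneg hlam ht).trans_eq
      sum_powerset_youngSetProb⟩

lemma countLeProb_mem_Icc (m : ℕ) (hlam : ∀ j, 0 ≤ lam j) (ht : 0 ≤ t) :
    countLeProb lam T m t ∈ Set.Icc 0 1 :=
  sum_youngSetProb_mem_Icc (filter_subset _ _) hlam ht

lemma countEqProb_mem_Icc (m : ℕ) (hlam : ∀ j, 0 ≤ lam j) (ht : 0 ≤ t) :
    countEqProb lam T m t ∈ Set.Icc 0 1 :=
  sum_youngSetProb_mem_Icc (powersetCard_eq_filter ▸ filter_subset _ _) hlam ht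

lemma norm_countEqProb_le_one (m : ℕ) (hlam : ∀ j, 0 ≤ lam j) (ht : 0 ≤ t) :
    ‖countEqProb lam T m t‖ ≤ 1 := by
  have h := countEqProb_mem_Icc (T := T) m hlam ht
  rw [norm_of_nonneg h.1]
  exact h.2

lemma youngSetProb_eq_prod_ite (hW : W ⊆ T) :
    youngSetProb lam T W t
      = ∏ j ∈ T, if j ∈ W then 1 - exp (-lam j * t) else exp (-lam j * t) := by
  rw [prod_ite, filter_mem_eq_inter, Finset.inter_eq_right.2 hW, filter_notMem_eq_sdiff,
    youngSetProb]

lemma youngSetProb_congr {lam' : ι → ℝ} (h : ∀ j ∈ T, lam j = lam' j) (hW : W ⊆ T) :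
    youngSetProb lam T W t = youngSetProb lam' T W t := by
  unfold youngSetProb
  congr 1 <;> refine prod_congr rfl fun j hj => ?_
  · rw [h j (hW hj)]
  · rw [h j (mem_sdiff.1 hj).1]

lemma countLeProb_congr {lam' : ι → ℝ} (h : ∀ j ∈ T, lam j = lam' j) (m : ℕ) :
    countLeProb lam T m = countLeProb lam' T m :=
  funext fun _ => sum_congr rfl fun _ hW =>
    youngSetProb_congr h (mem_powerset.1 (mem_filter.1 hW).1)

lemma countEqProb_congr {lam' : ι → ℝ} (h : ∀ j ∈ T, lam j = lam' j) (m : ℕ) :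
    countEqProb lam T m = countEqProb lam' T m :=
  funext fun _ => sum_congr rfl fun _ hW => youngSetProb_congr h (mem_powersetCard.1 hW).1

lemma countEqProb_pos {m : ℕ} (hm : m ≤ #T) (hlam : ∀ j, 0 < lam j) (ht : 0 < t) :
    0 < countEqProb lam T m t :=
  sum_pos (fun _ _ => youngSetProb_pos hlam ht) (powersetCard_nonempty.2 hm)

lemma youngSetProb_insert {i : ι} (hi : i ∉ T) (hW : W ⊆ T) :
    youngSetProb lam (insert i T) W t = exp (-lam i * t) * youngSetProb lam T W t := by
  rw [youngSetProb, youngSetProb, Finset.insert_sdiff_of_notMem _ fun h => hi (hW h),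
    prod_insert fun h => hi (mem_sdiff.1 h).1]
  ring

lemma youngSetProb_insert_insert {i : ι} (hi : i ∉ T) (hW : W ⊆ T) :
    youngSetProb lam (insert i T) (insert i W) t
      = (1 - exp (-lam i * t)) * youngSetProb lam T W t := by
  rw [youngSetProb, youngSetProb, Finset.insert_sdiff_insert, Finset.sdiff_insert_of_notMem hi,
    prod_insert fun h => hi (hW h)]
  ring

lemma countLeProb_insert {i : ι} (hi : i ∉ T) (m : ℕ) :
    countLeProb lam (insert i T) m t
      = countLeProb lam T m t - (1 - exp (-lam i * t)) * countEqProb lam T m t := by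
  rw [countLeProb, countLeProb, countEqProb, powersetCard_eq_filter, sum_filter, sum_filter,
    sum_filter, sum_powerset_insert hi, mul_sum, ← sum_sub_distrib, ← sum_add_distrib]
  refine sum_congr rfl fun W hW => ?_
  have hW := mem_powerset.1 hW
  rw [card_insert_of_notMem fun h => hi (hW h), youngSetProb_insert hi hW,
    youngSetProb_insert_insert hi hW]
  split_ifs <;> first | omega | ring

end YoungSetProb

section Exponential

instance nullSingletonClass_expMeasure (r : ℝ) : NullSingletonClass (expMeasure r) :=
  nullSingletonClass_withDensity _

lemma expMeasure_Iio {r t : ℝ} (hr : 0 < r) (ht : 0 ≤ t) :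
    expMeasure r (Iio t) = ENNReal.ofReal (1 - exp (-r * t)) := by
  have := isProbabilityMeasure_expMeasure hr
  rw [measure_congr Iio_ae_eq_Iic, ← ofReal_cdf, cdf_expMeasure_eq hr, if_pos ht, neg_mul]

lemma expMeasure_Ici {r t : ℝ} (hr : 0 < r) (ht : 0 ≤ t) :
    expMeasure r (Ici t) = ENNReal.ofReal (exp (-r * t)) := by
  have := isProbabilityMeasure_expMeasure hr
  rw [← compl_Iio, prob_compl_eq_one_sub measurableSet_Iio, expMeasure_Iio hr ht,
    ← ENNReal.ofReal_one,
    ← ENNReal.ofReal_sub _ (sub_nonneg.2 (exp_le_one_iff.2 (by nlinarith))), sub_sub_cancel]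

lemma lintegral_expMeasure (r : ℝ) (f : ℝ → ℝ≥0∞) :
    ∫⁻ t, f t ∂expMeasure r = ∫⁻ t in Ioi 0, ENNReal.ofReal (r * exp (-r * t)) * f t := by
  have hsupp : (exponentialPDF r * f).support ⊆ Ici 0 := fun t ht => by
    by_contra h
    exact ht (by simp [exponentialPDF_of_neg (not_le.1 h)])
  change ∫⁻ t, f t ∂volume.withDensity (exponentialPDF r) = _
  rw [lintegral_withDensity_eq_lintegral_mul_non_measurable _ (f := exponentialPDF r)
      (measurable_exponentialPDFReal r).ennreal_ofReal (.of_forall fun _ => ENNReal.ofReal_lt_top),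
    ← setLIntegral_eq_of_support_subset hsupp, setLIntegral_congr Ioi_ae_eq_Ici.symm]
  refine setLIntegral_congr_fun measurableSet_Ioi fun t (ht : 0 < t) => ?_
  rw [Pi.mul_apply, exponentialPDF_of_nonneg ht.le, neg_mul]

end Exponential

lemma pi_apply_eq_lintegral_insertNth {n : ℕ} {α : Fin (n + 1) → Type*}
    [∀ j, MeasurableSpace (α j)] (μ : ∀ j, Measure (α j)) [∀ j, SigmaFinite (μ j)]
    (k : Fin (n + 1)) {s : Set (∀ j, α j)} (hs : MeasurableSet s) :
    Measure.pi μ s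
      = ∫⁻ t, Measure.pi (fun j => μ (k.succAbove j)) {y | k.insertNth t y ∈ s} ∂μ k := by
  rw [← (measurePreserving_piFinSuccAbove μ k).symm.measure_preimage_equiv,
    Measure.prod_apply (hs.preimage (MeasurableEquiv.piFinSuccAbove α k).symm.measurable)]
  rfl

lemma Fin.prod_succAbove_eq_prod_univ_erase {M : Type*} [CommMonoid M] {n : ℕ}
    (f : Fin (n + 1) → M) (k : Fin (n + 1)) :
    ∏ j : Fin n, f (k.succAbove j) = ∏ j ∈ univ.erase k, f j := by
  rw [← compl_singleton, ← Fin.image_succAbove_univ,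
    prod_image fun _ _ _ _ h => Fin.succAbove_right_injective h]

section Occupancy

variable {ι : Type*} [Fintype ι] [DecidableEq ι]

noncomputable def youngerSet (k : ι) (a : ι → ℝ) : Finset ι :=
  univ.filter fun j => j ≠ k ∧ a j < a k

lemma measurableSet_youngerSet_preimage (k : ι) (S : Finset ι) :
    MeasurableSet (youngerSet k ⁻¹' {S}) := by
  have : youngerSet k ⁻¹' {S} = {a | ∀ j, (j ≠ k ∧ a j < a k) ↔ j ∈ S} := by
    ext a; simp [youngerSet, Finset.ext_iff]
  rw [this]
  measurability

variable {n : ℕ} (k : Fin (n + 1))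

lemma setOf_youngerSet_insertNth_eq_pi {S : Finset (Fin (n + 1))} (hS : S ⊆ univ.erase k)
    (t : ℝ) :
    {y | youngerSet k (k.insertNth t y) = S}
      = Set.pi univ fun j => if k.succAbove j ∈ S then Iio t else Ici t := by
  ext y
  have hkS : k ∉ S := fun h => by simpa using hS h
  simp only [youngerSet, Finset.ext_iff, Fin.forall_iff_succAbove k, Set.mem_ofPred_eq,
    mem_filter, Finset.mem_univ, true_and, ne_eq, not_true_eq_false, false_and, hkS,
    iff_self, Fin.succAbove_ne, not_false_eq_true, Fin.insertNth_apply_same,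
    Fin.insertNth_apply_succAbove, Set.mem_pi, Set.mem_univ, forall_const]
  refine forall_congr' fun j => ?_
  split_ifs with hj <;> simp [hj]

lemma pi_youngerSet_preimage (lam : Fin (n + 1) → ℝ) (hlam : ∀ j, 0 < lam j)
    {S : Finset (Fin (n + 1))} (hS : S ⊆ univ.erase k) :
    Measure.pi (fun j => expMeasure (lam j)) (youngerSet k ⁻¹' {S})
      = ∫⁻ t in Ioi 0,
          ENNReal.ofReal (lam k * exp (-lam k * t) * youngSetProb lam (univ.erase k) S t) := by
  have := fun j => isProbabilityMeasure_expMeasure (hlam j)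
  rw [pi_apply_eq_lintegral_insertNth _ k (measurableSet_youngerSet_preimage k S),
    lintegral_expMeasure]
  refine setLIntegral_congr_fun measurableSet_Ioi fun t (ht : 0 < t) => ?_
  have hexp : ∀ j, exp (-lam j * t) ≤ 1 := fun j => exp_le_one_iff.2 (by nlinarith [hlam j])
  rw [ENNReal.ofReal_mul (p := lam k * exp (-lam k * t)) (mul_pos (hlam k) (exp_pos _)).le,
    youngSetProb_eq_prod_ite hS,
    ENNReal.ofReal_prod_of_nonneg fun j _ => by
      split_ifs <;> linarith [hexp j, exp_pos (-lam j * t)]]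
  congr 1
  change Measure.pi _ {y | youngerSet k (k.insertNth t y) = S} = _
  rw [setOf_youngerSet_insertNth_eq_pi k hS, Measure.pi_pi,
    Fin.prod_succAbove_eq_prod_univ_erase
      (fun j => expMeasure (lam j) (if j ∈ S then Iio t else Ici t))]
  refine prod_congr rfl fun j _ => ?_
  split_ifs
  · exact expMeasure_Iio (hlam j) ht.le
  · exact expMeasure_Ici (hlam j) ht.le

theorem occ_eq_integral (C : ℕ) (lam : Fin (n + 1) → ℝ) (hlam : ∀ j, 0 < lam j) :
    occ (n + 1) C k lam
      = ∫ t in Ioi 0, lam k * exp (-lam k * t) * countLeProb lam (univ.erase k) (C - 1) t := by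
  have hev : {a : Fin (n + 1) → ℝ | #(univ.filter fun j => j ≠ k ∧ a j < a k) ≤ C - 1}
      = youngerSet k ⁻¹' ↑({S ∈ (univ.erase k).powerset | #S ≤ C - 1}) := by
    ext a
    simp [youngerSet, subset_iff]
  rw [occ, hev,
    ← sum_measure_preimage_singleton _ fun S _ => measurableSet_youngerSet_preimage k S,
    sum_congr rfl fun S hS =>
      pi_youngerSet_preimage k lam hlam (mem_powerset.1 (mem_filter.1 hS).1),
    ← lintegral_finsetSum' _ fun S _ => by fun_prop, integral_eq_lintegral_of_nonneg_ae]
  · congr 1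
    refine setLIntegral_congr_fun measurableSet_Ioi fun t (ht : 0 < t) => ?_
    rw [countLeProb, mul_sum, ENNReal.ofReal_sum_of_nonneg fun S _ => ?_]
    exact mul_nonneg (mul_pos (hlam k) (exp_pos _)).le
      (youngSetProb_nonneg (fun j => (hlam j).le) ht.le)
  · filter_upwards [ae_restrict_mem measurableSet_Ioi] with t (ht : 0 < t)
    exact mul_nonneg (mul_pos (hlam k) (exp_pos _)).le
      (countLeProb_mem_Icc (C - 1) (fun j => (hlam j).le) ht.le).1
  · exact (by fun_prop : Continuous _).aestronglyMeasurable

end Occupancy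

section Sensitivity

variable {N : ℕ}

lemma occ_update_eq (C : ℕ) {n : ℕ} {i k : Fin (n + 1)} (hik : i ≠ k)
    {lam : Fin (n + 1) → ℝ} (hlam : ∀ j, 0 < lam j) {x : ℝ} (hx : 0 < x) :
    occ (n + 1) C k (Function.update lam i x)
      = (∫ t in Ioi 0, lam k * exp (-lam k * t) *
            (countLeProb lam (univ \ {i, k}) (C - 1) t -
              countEqProb lam (univ \ {i, k}) (C - 1) t))
        + lam k * ∫ t in Ioi 0,
            exp (-(x + lam k) * t) * countEqProb lam (univ \ {i, k}) (C - 1) t := by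
  set T : Finset (Fin (n + 1)) := univ \ {i, k}
  have hlam' : ∀ j, 0 < Function.update lam i x j := by
    intro j
    rcases eq_or_ne j i with rfl | hj
    · simpa using hx
    · simpa [hj] using hlam j
  have hT : univ.erase k = insert i T := by
    ext j
    rcases eq_or_ne j i with rfl | hj <;> simp [T, *]
  have hiT : i ∉ T := by simp [T]
  have hagree : ∀ j ∈ T, Function.update lam i x j = lam j := fun j hj =>
    Function.update_of_ne (by rintro rfl; exact hiT hj) x lam
  rw [occ_eq_integral k C _ hlam', hT, Function.update_of_ne hik.symm, ← integral_const_mul,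
    ← integral_add]
  · refine setIntegral_congr_fun measurableSet_Ioi fun t _ => ?_
    rw [countLeProb_insert hiT, Function.update_self, countLeProb_congr hagree,
      countEqProb_congr hagree, show -(x + lam k) * t = -x * t + -lam k * t by ring, exp_add]
    ring
  · refine (exp_neg_integrableOn_Ioi 0 (hlam k)).const_mul (lam k) |>.mul_bdd (c := 1)
      (by fun_prop) (ae_restrict_of_forall_mem measurableSet_Ioi fun t (ht : 0 < t) => ?_)
    have hL := countLeProb_mem_Icc (T := T) (C - 1) (fun j => (hlam j).le) ht.le
    have hE := countEqProb_mem_Icc (T := T) (C - 1) (fun j => (hlam j).le) ht.le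
    rw [norm_eq_abs, abs_sub_le_iff]
    constructor <;> linarith [hL.1, hL.2, hE.1, hE.2]
  · exact ((exp_neg_integrableOn_Ioi 0 (add_pos hx (hlam k))).mul_bdd (c := 1) (by fun_prop)
      (ae_restrict_of_forall_mem measurableSet_Ioi fun t ht =>
        norm_countEqProb_le_one _ (fun j => (hlam j).le) (le_of_lt ht))).const_mul (lam k)

lemma Gkernel_eq_integral_countEqProb (C : ℕ) (i k : Fin N) (lam : Fin N → ℝ) :
    Gkernel N C i k lam
      = ∫ t in Ioi 0,
          t * exp (-(lam i + lam k) * t) * countEqProb lam (univ \ {i, k}) (C - 1) t :=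
  rfl

lemma Gkernel_comm (C : ℕ) (i k : Fin N) (lam : Fin N → ℝ) :
    Gkernel N C i k lam = Gkernel N C k i lam := by
  rw [Gkernel_eq_integral_countEqProb, Gkernel_eq_integral_countEqProb, Finset.pair_comm i k,
    add_comm (lam i)]

lemma Gkernel_pos {C : ℕ} (hCN : C < N) {i k : Fin N} (hik : i ≠ k) {lam : Fin N → ℝ}
    (hlam : ∀ j, 0 < lam j) : 0 < Gkernel N C i k lam := by
  have hm : C - 1 ≤ #(univ \ {i, k}) := by
    rw [card_sdiff_of_subset (subset_univ _), card_univ, Fintype.card_fin, card_pair hik]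
    omega
  have hpos : ∀ t ∈ Ioi (0 : ℝ),
      0 < t * exp (-(lam i + lam k) * t) * countEqProb lam (univ \ {i, k}) (C - 1) t :=
    fun t ht => mul_pos (mul_pos ht (exp_pos _)) (countEqProb_pos hm hlam ht)
  have hint := (integrableOn_mul_exp_neg_mul (add_pos (hlam i) (hlam k))).mul_bdd
    (continuous_countEqProb lam (univ \ {i, k}) (C - 1)).aestronglyMeasurable
    (ae_restrict_of_forall_mem measurableSet_Ioi fun t (ht : 0 < t) =>
      norm_countEqProb_le_one _ (fun j => (hlam j).le) ht.le)
  rw [Gkernel_eq_integral_countEqProb, setIntegral_pos_iff_support_of_nonneg_ae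
    (ae_restrict_of_forall_mem measurableSet_Ioi fun t ht => (hpos t ht).le) hint,
    Set.inter_eq_right.2 fun t ht => Function.mem_support.2 (hpos t ht).ne']
  simp

end Sensitivity

theorem occupancy_sensitivity_general (N C : ℕ) (hCN : C < N)
    (i k : Fin N) (hik : i ≠ k)
    (lam : Fin N → ℝ) (hlam : ∀ j, 0 < lam j) :
    HasDerivAt (fun x : ℝ => occ N C k (Function.update lam i x))
        (-(lam k) * Gkernel N C i k lam) (lam i) ∧
      Gkernel N C i k lam = Gkernel N C k i lam ∧
      0 < Gkernel N C i k lam := by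
  refine ⟨?_, Gkernel_comm C i k lam, Gkernel_pos hCN hik hlam⟩
  obtain ⟨n, rfl⟩ : ∃ n, N = n + 1 := ⟨N - 1, by have := i.pos; omega⟩
  set T : Finset (Fin (n + 1)) := univ \ {i, k}
  have hlaplace := hasDerivAt_integral_exp_neg_mul (add_pos (hlam i) (hlam k))
    (continuous_countEqProb lam T (C - 1)).aestronglyMeasurable
    fun t ht => norm_countEqProb_le_one _ (fun j => (hlam j).le) (le_of_lt ht)
  have hderiv := ((hlaplace.comp_add_const (lam i) (lam k)).const_mul (lam k)).const_add
    (∫ t in Ioi 0, lam k * exp (-lam k * t) *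
      (countLeProb lam T (C - 1) t - countEqProb lam T (C - 1) t))
  rw [Gkernel_eq_integral_countEqProb]
  refine (hderiv.congr_deriv (by ring)).congr_of_eventuallyEq ?_
  filter_upwards [Ioi_mem_nhds (hlam i)] with x hx
  exact occ_update_eq C hik hlam hx

/-- Occupancy sensitivity: for `i ≠ k` and every `λ ∈ (0,∞)^N`, the partial
derivative `∂π_k/∂λ_i` exists and equals `-λ_k G_{ik}(λ)`; moreover
`G_{ik}(λ) = G_{ki}(λ)` and `G_{ik}(λ) > 0`. -/
theorem occupancy_sensitivity (N C : ℕ) (hN : 2 ≤ N) (hC1 : 1 ≤ C) (hCN : C < N)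
    (i k : Fin N) (hik : i ≠ k)
    (lam : Fin N → ℝ) (hlam : ∀ j, 0 < lam j) :
    HasDerivAt (fun x : ℝ => occ N C k (Function.update lam i x))
        (-(lam k) * Gkernel N C i k lam) (lam i) ∧
      Gkernel N C i k lam = Gkernel N C k i lam ∧
      0 < Gkernel N C i k lam :=
  occupancy_sensitivity_general N C hCN i k hik lam hlam
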